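/- Let n ≥ 1 and let G ≤ S_n be a permutation group. Suppose that for every multiaffine G-invariant polynomial f ∈ ℂ[z_1,…,z_n] and every ζ_1,…,ζ_n in the open upper half-plane H there exists ζ ∈ H such that f(ζ_1,…,ζ_n) = f(ζ,…,ζ). Then the G-symmetrizer T_G = (1/|G|) ∑_{σ∈G} σ maps every stable multiaffine polynomial in ℂ[z_1,…,z_n] to a stable polynomial. -/

import Mathlib

open MvPolynomial
open scoped Classical

/-- A polynomial is stable if it is nonvanishing whenever all arguments lie in the
open upper half-plane `H = {z : ℂ | 0 < z.im}`. -/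
def IsStable {σ : Type*} (f : MvPolynomial σ ℂ) : Prop :=
  ∀ x : σ → ℂ, (∀ i, 0 < (x i).im) → eval x f ≠ 0

/-- A polynomial is multiaffine if it has degree at most 1 in each variable. -/
def IsMultiaffine {σ : Type*} (f : MvPolynomial σ ℂ) : Prop :=
  ∀ i, degreeOf i f ≤ 1

/-- The `G`-symmetrizer `T_G = (1/|G|) ∑_{σ ∈ G} σ` applied to `f`. -/
noncomputable def symmG {n : ℕ} (G : Subgroup (Equiv.Perm (Fin n)))
    (f : MvPolynomial (Fin n) ℂ) : MvPolynomial (Fin n) ℂ :=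
  (Nat.card G : ℂ)⁻¹ • ∑ σ : G, rename (⇑(σ : Equiv.Perm (Fin n))) f

/-- `G` is orbit homogeneous: whenever two subsets `A, B` of `{1,…,n}` satisfy
`|A ∩ S| = |B ∩ S|` for every orbit `S` of `G`, some `σ ∈ G` maps `A` onto `B`. -/
def OrbitHomogeneous {n : ℕ} (G : Subgroup (Equiv.Perm (Fin n))) : Prop :=
  ∀ A B : Finset (Fin n),
    (∀ i : Fin n, ((A : Set (Fin n)) ∩ MulAction.orbit G i).ncard
      = ((B : Set (Fin n)) ∩ MulAction.orbit G i).ncard) →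
    ∃ σ ∈ G, A.image ⇑σ = B

/-!
The symmetrizer `T_G f` is again multiaffine and `G`-invariant, so by hypothesis its value at
a point of `Hⁿ` equals its value at some diagonal point `(ζ, …, ζ)` with `ζ ∈ H`. On the diagonal
every permutation acts trivially, so `T_G f` and `f` agree there, and `f` does not vanish there.
-/

section Multiaffine

variable {σ τ : Type*}

theorem IsMultiaffine.rename_equiv {f : MvPolynomial σ ℂ} (hf : IsMultiaffine f) (e : σ ≃ τ) :
    IsMultiaffine (rename e f) := fun i => by
  rw [← e.apply_symm_apply i, degreeOf_rename_of_injective e.injective]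
  exact hf _

theorem IsMultiaffine.smul {f : MvPolynomial σ ℂ} (hf : IsMultiaffine f) (c : ℂ) :
    IsMultiaffine (c • f) := fun i => by
  rw [smul_eq_C_mul]
  exact (degreeOf_C_mul_le _ _ _).trans (hf i)

theorem IsMultiaffine.sum {ι : Type*} (s : Finset ι) {f : ι → MvPolynomial σ ℂ}
    (hf : ∀ j ∈ s, IsMultiaffine (f j)) : IsMultiaffine (∑ j ∈ s, f j) := fun i =>
  (degreeOf_sum_le _ _ _).trans (Finset.sup_le fun j hj => hf j hj i)

end Multiaffine

theorem eval_const_rename {σ τ R : Type*} [CommSemiring R] (k : σ → τ) (z : R)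
    (f : MvPolynomial σ R) :
    eval (fun _ => z) (rename k f) = eval (fun _ => z) f := by
  rw [eval_rename]
  rfl

section Symmetrizer

variable {n : ℕ} (G : Subgroup (Equiv.Perm (Fin n))) {f : MvPolynomial (Fin n) ℂ}

theorem IsMultiaffine.symmG (hf : IsMultiaffine f) : IsMultiaffine (_root_.symmG G f) := by
  unfold _root_.symmG
  exact (IsMultiaffine.sum Finset.univ fun (σ : G) _ =>
    hf.rename_equiv (σ : Equiv.Perm (Fin n))).smul _

theorem rename_symmG_of_mem {τ : Equiv.Perm (Fin n)} (hτ : τ ∈ G) :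
    rename τ (symmG G f) = symmG G f := by
  have rename_rename_coe : ∀ σ : G, rename τ (rename (σ : Equiv.Perm (Fin n)) f)
      = rename ((⟨τ, hτ⟩ * σ : G) : Equiv.Perm (Fin n)) f := fun σ => by
    rw [rename_rename]
    rfl
  simp only [symmG, map_smul, map_sum, rename_rename_coe]
  congr 1
  refine Fintype.sum_bijective _ (Group.mulLeft_bijective ⟨τ, hτ⟩) _ _ fun _ => ?_
  rfl

theorem eval_const_symmG (z : ℂ) : eval (fun _ => z) (symmG G f) = eval (fun _ => z) f := by
  have hcard : (Nat.card G : ℂ) ≠ 0 := Nat.cast_ne_zero.mpr Nat.card_pos.ne'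
  simp only [symmG, smul_eval, map_sum, eval_const_rename, Finset.sum_const, Finset.card_univ,
    nsmul_eq_mul, ← Nat.card_eq_fintype_card, ← mul_assoc, inv_mul_cancel₀ hcard, one_mul]

end Symmetrizer

theorem coincidence_property_implies_symmetrizer_preserves_stability_general
    (n : ℕ) (G : Subgroup (Equiv.Perm (Fin n)))
    (hG : ∀ f : MvPolynomial (Fin n) ℂ, IsMultiaffine f →
      (∀ σ ∈ G, rename ⇑σ f = f) →
      ∀ ζ : Fin n → ℂ, (∀ i, 0 < (ζ i).im) →
        ∃ z : ℂ, 0 < z.im ∧ eval ζ f = eval (fun _ => z) f) :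
    ∀ f : MvPolynomial (Fin n) ℂ, IsMultiaffine f → IsStable f →
      IsStable (symmG G f) := by
  intro f hf hstable x hx
  obtain ⟨z, hz, hxz⟩ :=
    hG _ (hf.symmG G) (fun _ hτ => rename_symmG_of_mem G hτ) x hx
  rw [hxz, eval_const_symmG]
  exact hstable _ fun _ => hz

/-- If every multiaffine G-invariant polynomial satisfies the coincidence property
on the open upper half-plane, then the G-symmetrizer preserves stability of
multiaffine polynomials. -/
theorem coincidence_property_implies_symmetrizer_preserves_stability
    (n : ℕ) (hn : 1 ≤ n) (G : Subgroup (Equiv.Perm (Fin n)))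
    (hG : ∀ f : MvPolynomial (Fin n) ℂ, IsMultiaffine f →
      (∀ σ ∈ G, rename ⇑σ f = f) →
      ∀ ζ : Fin n → ℂ, (∀ i, 0 < (ζ i).im) →
        ∃ z : ℂ, 0 < z.im ∧ eval ζ f = eval (fun _ => z) f) :
    ∀ f : MvPolynomial (Fin n) ℂ, IsMultiaffine f → IsStable f →
      IsStable (symmG G f) :=
  coincidence_property_implies_symmetrizer_preserves_stability_general n G hG
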